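/- Let X ⊆ ℝⁿ be a nonempty convex compact set with κ = max_{x∈X} ‖x‖₂ > 0 and C = cone({κ} × X) ⊆ ℝ^{n+1}. Let ω > 0, f ∈ ℝⁿ, x ∈ X, α ≥ 0 with π_C(u') = α·(κ, x) for some u' ∈ ℝ^{n+1}. Set v = (⟨f, x⟩/κ, −f) and u = u' + ω v. Assume π_C(u) ≠ 0 and let x⁺ ∈ X and β > 0 be such that π_C(u) = β·(κ, x⁺). Then ⟨f, x⁺⟩ ≤ ⟨f, x⟩ − (κ / (ω · ‖π_C(u)‖_∞)) · ‖π_C(u) − π_C(u')‖₂². In particular, if F(·, y) is linear with F(z, y) = ⟨f, z⟩ for all z, this reads F(x⁺, y) − F(x, y) ≤ −(κ / (ω · ‖π_C(u)‖_∞)) · ‖π_C(u) − π_C(u')‖₂². -/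

import Mathlib

set_option autoImplicit false

open scoped RealInnerProductSpace
open Finset

noncomputable section

/-- The lifted vector `(t, y) ∈ ℝ × ℝⁿ = ℝ^{n+1}`. -/
def pr {n : ℕ} (t : ℝ) (y : EuclideanSpace ℝ (Fin n)) :
    EuclideanSpace ℝ (Fin (n + 1)) :=
  WithLp.toLp 2 (Fin.cons t (fun i => y i) : Fin (n + 1) → ℝ)

/-- The conic hull `cone({κ} × X) = {α • (κ, x) : α ≥ 0, x ∈ X}`. -/
def coneLift {n : ℕ} (κ : ℝ) (X : Set (EuclideanSpace ℝ (Fin n))) :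
    Set (EuclideanSpace ℝ (Fin (n + 1))) :=
  {u | ∃ α : ℝ, 0 ≤ α ∧ ∃ x ∈ X, u = α • pr κ x}

/-- `p` is the Euclidean orthogonal projection of `u` onto the set `S`. -/
def IsProjOn {E : Type*} [NormedAddCommGroup E] [InnerProductSpace ℝ E]
    (u : E) (S : Set E) (p : E) : Prop :=
  p ∈ S ∧ ∀ z ∈ S, dist u p ≤ dist u z

/-- The max-norm `‖u‖_∞ = max_i |u_i|` on `ℝ^{n+1}`. -/
def maxNorm {n : ℕ} (u : EuclideanSpace ℝ (Fin (n + 1))) : ℝ :=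
  Finset.univ.sup' ⟨0, Finset.mem_univ 0⟩ fun i => |u i|

/-!
Projections onto a convex set are firmly nonexpansive, so
`‖π_C(u) - π_C(u')‖² ≤ ⟪u - u', π_C(u) - π_C(u')⟫ = ω ⟪v, π_C(u) - π_C(u')⟫`.
The vector `v = (⟪f, x⟫/κ, -f)` is orthogonal to `(κ, x)`, hence to `π_C(u')`, while
`⟪v, β (κ, x⁺)⟫ = β (⟪f, x⟫ - ⟪f, x⁺⟫)`. Finally `β κ`, the first coordinate of `π_C(u)`,
is at most `‖π_C(u)‖_∞`.
-/

section Lift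

variable {n : ℕ}

lemma pr_zero (t : ℝ) (y : EuclideanSpace ℝ (Fin n)) : pr t y 0 = t := rfl

lemma smul_pr (c t : ℝ) (y : EuclideanSpace ℝ (Fin n)) :
    c • pr t y = pr (c * t) (c • y) := by
  ext i
  induction i using Fin.cases <;> simp [pr]

lemma pr_add_pr (s t : ℝ) (y z : EuclideanSpace ℝ (Fin n)) :
    pr s y + pr t z = pr (s + t) (y + z) := by
  ext i
  induction i using Fin.cases <;> simp [pr]

lemma inner_pr_pr (s t : ℝ) (y z : EuclideanSpace ℝ (Fin n)) :
    ⟪pr s y, pr t z⟫ = s * t + ⟪y, z⟫ := by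
  simp [pr, PiLp.inner_apply, Fin.sum_univ_succ, mul_comm]

lemma inner_pr_div_smul_pr {κ : ℝ} (hκ : κ ≠ 0) (f x y : EuclideanSpace ℝ (Fin n)) (c : ℝ) :
    ⟪pr (⟪f, x⟫ / κ) (-f), c • pr κ y⟫ = c * (⟪f, x⟫ - ⟪f, y⟫) := by
  rw [real_inner_smul_right, inner_pr_pr, inner_neg_left, div_mul_cancel₀ _ hκ]
  ring

lemma convex_coneLift (κ : ℝ) {X : Set (EuclideanSpace ℝ (Fin n))} (hX : Convex ℝ X) :
    Convex ℝ (coneLift κ X) := by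
  rintro _ ⟨a, ha, y, hy, rfl⟩ _ ⟨b, hb, z, hz, rfl⟩ s t hs ht -
  have hsa : 0 ≤ s * a := mul_nonneg hs ha
  have htb : 0 ≤ t * b := mul_nonneg ht hb
  rcases (add_nonneg hsa htb).eq_or_lt with hγ | hγ
  · have h1 : s * a = 0 := by linarith
    have h2 : t * b = 0 := by linarith
    exact ⟨0, le_rfl, y, hy, by simp [smul_smul, h1, h2]⟩
  · set γ := s * a + t * b
    refine ⟨γ, hγ.le, (s * a / γ) • y + (t * b / γ) • z,
      hX hy hz (by positivity) (by positivity) (by rw [← add_div, div_self hγ.ne']), ?_⟩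
    rw [smul_smul, smul_smul, smul_pr, smul_pr, pr_add_pr, smul_pr, smul_add, smul_smul,
      smul_smul, mul_div_cancel₀ _ hγ.ne', mul_div_cancel₀ _ hγ.ne', ← add_mul]

end Lift

namespace IsProjOn

variable {E : Type*} [NormedAddCommGroup E] [InnerProductSpace ℝ E] {S : Set E}

lemma inner_sub_sub_nonpos (hS : Convex ℝ S) {u p : E} (h : IsProjOn u S p) {z : E}
    (hz : z ∈ S) : ⟪u - p, z - p⟫ ≤ 0 := by
  have : Nonempty S := ⟨⟨p, h.1⟩⟩
  have hinf : ‖u - p‖ = ⨅ w : S, ‖u - w‖ :=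
    le_antisymm (le_ciInf fun w => by simpa [dist_eq_norm] using h.2 w w.2)
      (ciInf_le (f := fun w : S => ‖u - w‖) ⟨0, by rintro _ ⟨w, rfl⟩; positivity⟩ ⟨p, h.1⟩)
  exact (norm_eq_iInf_iff_real_inner_le_zero hS h.1).mp hinf z hz

lemma norm_sub_sq_le_inner (hS : Convex ℝ S) {u u' p p' : E} (hp : IsProjOn u S p)
    (hp' : IsProjOn u' S p') : ‖p - p'‖ ^ 2 ≤ ⟪u - u', p - p'⟫ := by
  have h : ⟪u - p, p' - p⟫ ≤ 0 := hp.inner_sub_sub_nonpos hS hp'.1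
  have h' : ⟪u' - p', p - p'⟫ ≤ 0 := hp'.inner_sub_sub_nonpos hS hp.1
  have hsplit : u - u' = (u - p) - (u' - p') + (p - p') := by abel
  rw [← neg_sub p p', inner_neg_right] at h
  rw [hsplit, inner_add_left, inner_sub_left, real_inner_self_eq_norm_sq]
  linarith

end IsProjOn

lemma abs_apply_le_maxNorm {n : ℕ} (u : EuclideanSpace ℝ (Fin (n + 1))) (i : Fin (n + 1)) :
    |u i| ≤ maxNorm u :=
  Finset.le_sup' (fun i => |u i|) (Finset.mem_univ i)

theorem stmt13_general {n : ℕ} (X : Set (EuclideanSpace ℝ (Fin n)))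
    (hXcv : Convex ℝ X)
    (κ : ℝ) (hκpos : 0 < κ)
    (ω : ℝ) (hω : 0 < ω) (f : EuclideanSpace ℝ (Fin n))
    (x : EuclideanSpace ℝ (Fin n))
    (α : ℝ)
    (u' u pu' pu : EuclideanSpace ℝ (Fin (n + 1)))
    (hpu' : IsProjOn u' (coneLift κ X) pu')
    (hu'α : pu' = α • pr κ x)
    (hu : u = u' + ω • pr (⟪f, x⟫ / κ) (-f))
    (hpu : IsProjOn u (coneLift κ X) pu)
    (xp : EuclideanSpace ℝ (Fin n))
    (β : ℝ) (hβ : 0 < β) (huβ : pu = β • pr κ xp) :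
    ⟪f, xp⟫ ≤ ⟪f, x⟫ - κ / (ω * maxNorm pu) * ‖pu - pu'‖ ^ 2 := by
  have hdecrease : ‖pu - pu'‖ ^ 2 ≤ ω * β * (⟪f, x⟫ - ⟪f, xp⟫) := by
    have hinner : ⟪u - u', pu - pu'⟫ = ω * β * (⟪f, x⟫ - ⟪f, xp⟫) := by
      rw [hu, add_sub_cancel_left, real_inner_smul_left, inner_sub_right, huβ, hu'α,
        inner_pr_div_smul_pr hκpos.ne', inner_pr_div_smul_pr hκpos.ne', sub_self, mul_zero,
        sub_zero, ← mul_assoc]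
    exact hinner ▸ hpu.norm_sub_sq_le_inner (convex_coneLift κ hXcv) hpu'
  have hmax : β * κ ≤ maxNorm pu := by
    simpa [huβ, pr_zero, abs_of_pos (mul_pos hβ hκpos)] using abs_apply_le_maxNorm pu 0
  have hgap : 0 ≤ ⟪f, x⟫ - ⟪f, xp⟫ :=
    nonneg_of_mul_nonneg_right (le_trans (sq_nonneg _) hdecrease) (mul_pos hω hβ)
  have hM : 0 < maxNorm pu := lt_of_lt_of_le (mul_pos hβ hκpos) hmax
  rw [le_sub_comm, div_mul_eq_mul_div, div_le_iff₀ (mul_pos hω hM)]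
  calc κ * ‖pu - pu'‖ ^ 2 ≤ κ * (ω * β * (⟪f, x⟫ - ⟪f, xp⟫)) := by gcongr
    _ = ω * (⟪f, x⟫ - ⟪f, xp⟫) * (β * κ) := by ring
    _ ≤ ω * (⟪f, x⟫ - ⟪f, xp⟫) * maxNorm pu := by gcongr
    _ = (⟪f, x⟫ - ⟪f, xp⟫) * (ω * maxNorm pu) := by ring

/-- per-iteration claim of Theorem 6, part 2: under a CBA update
`u = u' + ω v` with `π_C(u') = α • (κ, x)`, `v = (⟨f, x⟩/κ, −f)`, and
`π_C(u) = β • (κ, x⁺)` with `β > 0`, one has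
`⟨f, x⁺⟩ ≤ ⟨f, x⟩ − (κ/(ω ‖π_C(u)‖_∞)) ‖π_C(u) − π_C(u')‖₂²`. -/
theorem stmt13 {n : ℕ} (X : Set (EuclideanSpace ℝ (Fin n)))
    (hXne : X.Nonempty) (hXcv : Convex ℝ X) (hXcp : IsCompact X)
    (κ : ℝ) (hκ : IsGreatest ((fun x => ‖x‖) '' X) κ) (hκpos : 0 < κ)
    (ω : ℝ) (hω : 0 < ω) (f : EuclideanSpace ℝ (Fin n))
    (x : EuclideanSpace ℝ (Fin n)) (hx : x ∈ X)
    (α : ℝ) (hα : 0 ≤ α)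
    (u' u pu' pu : EuclideanSpace ℝ (Fin (n + 1)))
    (hpu' : IsProjOn u' (coneLift κ X) pu')
    (hu'α : pu' = α • pr κ x)
    (hu : u = u' + ω • pr (⟪f, x⟫ / κ) (-f))
    (hpu : IsProjOn u (coneLift κ X) pu)
    (hpune : pu ≠ 0)
    (xp : EuclideanSpace ℝ (Fin n)) (hxp : xp ∈ X)
    (β : ℝ) (hβ : 0 < β) (huβ : pu = β • pr κ xp) :
    ⟪f, xp⟫ ≤ ⟪f, x⟫ - κ / (ω * maxNorm pu) * ‖pu - pu'‖ ^ 2 :=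
  stmt13_general X hXcv κ hκpos ω hω f x α u' u pu' pu hpu' hu'α hu hpu xp β hβ huβ
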